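/- Cost of privacy is nonnegative for the stochastic approach: let A be finite, p̄ a strictly positive probability vector, z : A → ℝ strictly positive, γ > 0, and w : A → ℝ with w(α) ≤ log p̄(α) for all α (the privatized log-weights, e.g., w(α) = ψ(k p̄(α)) − ψ(k)). Define the private policy P̃(α) = e^{w(α)} z(α)/∑ e^{w(α')} z(α') and the non-private value V = γ·log ∑_α p̄(α) z(α). Then ΔC = γ·∑_α P̃(α)·(w(α) − log p̄(α)) + V − γ·log ∑_α e^{w(α)} z(α) ≥ 0. -/

import Mathlib

/-!
With `S = ∑ e^w z`, the private policy satisfies `log (p̄ z / P̃) = log p̄ - w + log S`, so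
`ΔC / γ = log ∑ p̄ z - ∑ P̃ log (p̄ z / P̃)`. This is nonnegative by the Gibbs variational
inequality `∑ P log (b / P) ≤ log ∑ b` for a probability vector `P` and positive weights `b`,
which follows from `log x ≤ x - 1` applied to `b / (P ∑ b)`.
-/

open Finset Real

theorem mul_log_div_le_sub {p c : ℝ} (hp : 0 ≤ p) (hc : 0 < c) : p * log (c / p) ≤ c - p := by
  rcases hp.eq_or_lt with rfl | hp
  · simpa using hc.le
  calc p * log (c / p) ≤ p * (c / p - 1) :=
        mul_le_mul_of_nonneg_left (log_le_sub_one_of_pos (div_pos hc hp)) hp.le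
    _ = c - p := by field_simp

theorem sum_mul_log_div_le_log_sum {ι : Type*} {s : Finset ι} {p b : ι → ℝ}
    (hp : ∀ i ∈ s, 0 ≤ p i) (hp1 : ∑ i ∈ s, p i = 1) (hb : ∀ i ∈ s, 0 < b i) :
    ∑ i ∈ s, p i * log (b i / p i) ≤ log (∑ i ∈ s, b i) := by
  set B := ∑ i ∈ s, b i
  have hs : s.Nonempty := nonempty_of_sum_ne_zero (hp1 ▸ one_ne_zero)
  have hB : 0 < B := sum_pos hb hs
  have hsplit : ∀ i ∈ s, p i * log (b i / p i) = p i * log (b i / B / p i) + p i * log B := by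
    intro i hi
    rcases (hp i hi).eq_or_lt with h0 | hpos
    · simp [← h0]
    rw [div_right_comm, log_div (div_pos (hb i hi) hpos).ne' hB.ne']
    ring
  calc ∑ i ∈ s, p i * log (b i / p i)
      = ∑ i ∈ s, p i * log (b i / B / p i) + log B := by
        rw [sum_congr rfl hsplit, sum_add_distrib, ← sum_mul, hp1, one_mul]
    _ ≤ ∑ i ∈ s, (b i / B - p i) + log B := by
        gcongr with i hi
        exact mul_log_div_le_sub (hp i hi) (div_pos (hb i hi) hB)
    _ = log B := by
        rw [sum_sub_distrib, ← sum_div, div_self hB.ne', hp1, sub_self, zero_add]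

theorem cost_of_privacy_nonneg_general
    {A : Type*} [Fintype A] [Nonempty A]
    (pbar : A → ℝ) (hp : ∀ α, 0 < pbar α)
    (z : A → ℝ) (hz : ∀ α, 0 < z α) (γ : ℝ) (hγ : 0 < γ)
    (w : A → ℝ)
    (Ptilde : A → ℝ)
    (hPt : ∀ α, Ptilde α =
      Real.exp (w α) * z α / ∑ α', Real.exp (w α') * z α')
    (V : ℝ) (hV : V = γ * Real.log (∑ α, pbar α * z α)) :
    0 ≤ γ * (∑ α, Ptilde α * (w α - Real.log (pbar α)))
        + V - γ * Real.log (∑ α, Real.exp (w α) * z α) := by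
  set S := ∑ α, exp (w α) * z α
  have hS : 0 < S := sum_pos (fun α _ => mul_pos (exp_pos _) (hz α)) univ_nonempty
  have hPt_pos : ∀ α, 0 < Ptilde α := fun α => hPt α ▸ div_pos (mul_pos (exp_pos _) (hz α)) hS
  have hPt_sum : ∑ α, Ptilde α = 1 := by
    rw [sum_congr rfl fun α _ => hPt α, ← sum_div, div_self hS.ne']
  have hlog : ∀ α, log (pbar α * z α / Ptilde α) = log (pbar α) - w α + log S := by
    intro α
    have : pbar α * z α / Ptilde α = pbar α * S / exp (w α) := by
      rw [hPt]; field_simp [(hz α).ne']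
    rw [this, log_div (mul_pos (hp α) hS).ne' (exp_pos _).ne', log_mul (hp α).ne' hS.ne', log_exp]
    ring
  have gibbs := sum_mul_log_div_le_log_sum (s := univ) (fun α _ => (hPt_pos α).le) hPt_sum
    (fun α _ => mul_pos (hp α) (hz α))
  simp only [hlog, mul_add, sum_add_distrib, ← sum_mul, hPt_sum, one_mul] at gibbs
  have hneg : ∑ α, Ptilde α * (w α - log (pbar α)) = -∑ α, Ptilde α * (log (pbar α) - w α) := by
    rw [← sum_neg_distrib]; congr! 1 with α; ring
  rw [hV, hneg]
  linear_combination mul_nonneg hγ.le (sub_nonneg.2 gibbs)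

theorem cost_of_privacy_nonneg
    {A : Type*} [Fintype A] [Nonempty A]
    (pbar : A → ℝ) (hp : ∀ α, 0 < pbar α) (hsum : ∑ α, pbar α = 1)
    (z : A → ℝ) (hz : ∀ α, 0 < z α) (γ : ℝ) (hγ : 0 < γ)
    (w : A → ℝ) (hw : ∀ α, w α ≤ Real.log (pbar α))
    (Ptilde : A → ℝ)
    (hPt : ∀ α, Ptilde α =
      Real.exp (w α) * z α / ∑ α', Real.exp (w α') * z α')
    (V : ℝ) (hV : V = γ * Real.log (∑ α, pbar α * z α)) :
    0 ≤ γ * (∑ α, Ptilde α * (w α - Real.log (pbar α)))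
        + V - γ * Real.log (∑ α, Real.exp (w α) * z α) :=
  cost_of_privacy_nonneg_general pbar hp z hz γ hγ w Ptilde hPt V hV
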